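/- The Büchi automaton D₄ is deterministic, has 4 states, and recognises L_BKKS, i.e., L(D₄) = L_BKKS. -/

import Mathlib

/-- A (nondeterministic) Büchi/coBüchi automaton: an initial state, a set of
transitions, and a subset of *significant* transitions. -/
structure BuchiAutomaton (σ : Type) (Q : Type) where
  init : Q
  trans : Set (Q × σ × Q)
  sig : Set (Q × σ × Q)
  sig_sub : sig ⊆ trans

namespace BuchiAutomaton

variable {σ Q : Type}

/-- `ρ` is a run of `A` on the infinite word `w`, starting at the state `p`. -/
def IsRunFrom (A : BuchiAutomaton σ Q) (p : Q) (w : ℕ → σ) (ρ : ℕ → Q) : Prop :=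
  ρ 0 = p ∧ ∀ i, (ρ i, w i, ρ (i + 1)) ∈ A.trans

/-- Büchi acceptance: the run contains infinitely many significant transitions. -/
def BuchiAcc (A : BuchiAutomaton σ Q) (w : ℕ → σ) (ρ : ℕ → Q) : Prop :=
  ∀ N, ∃ i, N ≤ i ∧ (ρ i, w i, ρ (i + 1)) ∈ A.sig

/-- coBüchi acceptance: the run contains finitely many significant transitions. -/
def CoBuchiAcc (A : BuchiAutomaton σ Q) (w : ℕ → σ) (ρ : ℕ → Q) : Prop :=
  ∃ N, ∀ i, N ≤ i → (ρ i, w i, ρ (i + 1)) ∉ A.sig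

/-- The language of `A` (as a Büchi automaton), with initial state `p`. -/
def LangFrom (A : BuchiAutomaton σ Q) (p : Q) : Set (ℕ → σ) :=
  {w | ∃ ρ, A.IsRunFrom p w ρ ∧ A.BuchiAcc w ρ}

/-- The language of `A`, read as a Büchi automaton. -/
def Lang (A : BuchiAutomaton σ Q) : Set (ℕ → σ) :=
  A.LangFrom A.init

/-- The language of `A`, read as a coBüchi automaton. -/
def CoLang (A : BuchiAutomaton σ Q) : Set (ℕ → σ) :=
  {w | ∃ ρ, A.IsRunFrom A.init w ρ ∧ A.CoBuchiAcc w ρ}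

/-- `A` is deterministic: at most one outgoing transition per state and letter. -/
def Deterministic (A : BuchiAutomaton σ Q) : Prop :=
  ∀ p a q q', (p, a, q) ∈ A.trans → (p, a, q') ∈ A.trans → q = q'

/-- `FinRun A l p`: `l` is a finite run of `A` from the initial state, ending in
the state `p` (represented as the chronological list of its transitions). -/
inductive FinRun (A : BuchiAutomaton σ Q) : List (Q × σ × Q) → Q → Prop
  | nil : FinRun A [] A.init
  | snoc {l : List (Q × σ × Q)} {p : Q} {a : σ} {q : Q} :
      FinRun A l p → (p, a, q) ∈ A.trans → FinRun A (l ++ [(p, a, q)]) q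

/-- A resolver for `A`: a function from finite runs and letters to transitions,
such that on every finite run from the initial state ending in a state `p` and
every letter `a`, it outputs a transition on `a` with source `p`. -/
structure Resolver (A : BuchiAutomaton σ Q) where
  res : List (Q × σ × Q) → σ → Q × σ × Q
  res_valid : ∀ l p a, A.FinRun l p →
    (res l a).1 = p ∧ (res l a).2.1 = a ∧ res l a ∈ A.trans

/-- The history (finite run) built by a resolver after reading `n` letters of `w`. -/
def Resolver.hist {A : BuchiAutomaton σ Q} (r : Resolver A) (w : ℕ → σ) : ℕ → List (Q × σ × Q)
  | 0 => []
  | n + 1 => r.hist w n ++ [r.res (r.hist w n) (w n)]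

/-- The run induced by the resolver on `w` satisfies the Büchi condition. -/
def Resolver.InducedBuchiAcc {A : BuchiAutomaton σ Q} (r : Resolver A) (w : ℕ → σ) : Prop :=
  ∀ N, ∃ n, N ≤ n ∧ r.res (r.hist w n) (w n) ∈ A.sig

/-- The run induced by the resolver on `w` satisfies the coBüchi condition. -/
def Resolver.InducedCoBuchiAcc {A : BuchiAutomaton σ Q} (r : Resolver A) (w : ℕ → σ) : Prop :=
  ∃ N, ∀ n, N ≤ n → r.res (r.hist w n) (w n) ∉ A.sig

/-- `A` is history-deterministic (as a Büchi automaton). -/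
def HistoryDeterministic (A : BuchiAutomaton σ Q) : Prop :=
  ∃ r : Resolver A, ∀ w ∈ A.Lang, r.InducedBuchiAcc w

/-- `A` is history-deterministic (as a coBüchi automaton). -/
def CoHistoryDeterministic (A : BuchiAutomaton σ Q) : Prop :=
  ∃ r : Resolver A, ∀ w ∈ A.CoLang, r.InducedCoBuchiAcc w

end BuchiAutomaton

/-- The alphabet `{x, a, b}`. -/
inductive XAB : Type
  | x | a | b
deriving DecidableEq

open XAB in
/-- `L_BKKS`: the infinite words of the form `(xa + xb)^ω` containing
infinitely many occurrences of the infix `xaxa` or infinitely many occurrences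
of the infix `xbxb`. -/
def L_BKKS : Set (ℕ → XAB) :=
  {w | (∀ n, w (2 * n) = x ∧ (w (2 * n + 1) = a ∨ w (2 * n + 1) = b)) ∧
    ((∀ N, ∃ i, N ≤ i ∧ w i = x ∧ w (i + 1) = a ∧ w (i + 2) = x ∧ w (i + 3) = a) ∨
     (∀ N, ∃ i, N ≤ i ∧ w i = x ∧ w (i + 1) = b ∧ w (i + 2) = x ∧ w (i + 3) = b))}

/-- The states of the automaton `D₄`. -/
inductive DSt : Type
  | pa | pb | pa' | pb'
deriving DecidableEq

instance : Fintype DSt :=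
  ⟨{DSt.pa, DSt.pb, DSt.pa', DSt.pb'}, fun x => by cases x <;> simp⟩

open XAB DSt in
/-- The Büchi automaton `D₄`. -/
def D4 : BuchiAutomaton XAB DSt where
  init := pa
  trans := ({(pa', a, pa), (pb', b, pb)} : Set (DSt × XAB × DSt)) ∪
    ({(pa, x, pa'), (pb, x, pb'), (pa', b, pb), (pb', a, pa)} : Set (DSt × XAB × DSt))
  sig := {(pa', a, pa), (pb', b, pb)}
  sig_sub := Set.subset_union_left

/-! The automaton `D₄` is the graph of a partial transition function, so on each word it has at
most one run: the run `ρ` of the totalised transition function `d4Step`. This `ρ` is a run of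
`D₄` exactly when the word lies in `(xa + xb)^ω`, and then after reading a block `x c` it sits in
`p_c`. Hence the transition read at position `2n + 3` is significant iff the word has the infix
`x c x c` at position `2n`, while transitions read at even positions never are; so Büchi
acceptance of `ρ` is the condition defining `L_BKKS`. -/

namespace BuchiAutomaton

variable {σ Q : Type}

def detRun (f : Q → σ → Q) (p : Q) (w : ℕ → σ) : ℕ → Q
  | 0 => p
  | n + 1 => f (detRun f p w n) (w n)

variable {A : BuchiAutomaton σ Q} {f : Q → σ → Q}

theorem deterministic_of_eq_step (hf : ∀ p c q, (p, c, q) ∈ A.trans → q = f p c) :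
    A.Deterministic :=
  fun p c _ _ hq hq' => (hf p c _ hq).trans (hf p c _ hq').symm

theorem IsRunFrom.eq_detRun (hf : ∀ p c q, (p, c, q) ∈ A.trans → q = f p c) {p : Q}
    {w : ℕ → σ} {ρ : ℕ → Q} (hρ : A.IsRunFrom p w ρ) : ρ = detRun f p w := by
  funext i
  induction i with
  | zero => exact hρ.1
  | succ i ih => rw [detRun, ← ih]; exact hf _ _ _ (hρ.2 i)

theorem mem_langFrom_iff_of_eq_step (hf : ∀ p c q, (p, c, q) ∈ A.trans → q = f p c)
    (p : Q) (w : ℕ → σ) :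
    w ∈ A.LangFrom p ↔ A.IsRunFrom p w (detRun f p w) ∧ A.BuchiAcc w (detRun f p w) := by
  refine ⟨fun ⟨ρ, hρ, hacc⟩ => ?_, fun h => ⟨_, h⟩⟩
  rw [← hρ.eq_detRun hf]
  exact ⟨hρ, hacc⟩

theorem isRunFrom_detRun_iff (p : Q) (w : ℕ → σ) :
    A.IsRunFrom p w (detRun f p w) ↔
      ∀ i, (detRun f p w i, w i, detRun f p w (i + 1)) ∈ A.trans :=
  and_iff_right rfl

theorem buchiAcc_iff_frequently (w : ℕ → σ) (ρ : ℕ → Q) :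
    A.BuchiAcc w ρ ↔ ∃ᶠ i in Filter.atTop, (ρ i, w i, ρ (i + 1)) ∈ A.sig :=
  Filter.frequently_atTop.symm

end BuchiAutomaton

open BuchiAutomaton XAB DSt Filter

-- Where `D₄` has no transition, the value is arbitrary.
def d4Step : DSt → XAB → DSt
  | pa, _ => pa'
  | pb, _ => pb'
  | _, a => pa
  | _, _ => pb

theorem eq_d4Step_of_mem_trans (p : DSt) (c : XAB) (q : DSt) (h : (p, c, q) ∈ D4.trans) :
    q = d4Step p c := by
  simp only [D4, Set.mem_union, Set.mem_insert_iff, Set.mem_singleton_iff, Prod.mk.injEq] at h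
  rcases h with (⟨rfl, rfl, rfl⟩ | ⟨rfl, rfl, rfl⟩) |
    ⟨rfl, rfl, rfl⟩ | ⟨rfl, rfl, rfl⟩ | ⟨rfl, rfl, rfl⟩ | ⟨rfl, rfl, rfl⟩ <;> rfl

theorem d4_block_mem_trans_iff {p : DSt} (hp : p = pa ∨ p = pb) (c d : XAB) :
    (p, c, d4Step p c) ∈ D4.trans ∧ (d4Step p c, d, d4Step (d4Step p c) d) ∈ D4.trans ↔
      c = x ∧ (d = a ∨ d = b) := by
  rcases hp with rfl | rfl <;> cases c <;> cases d <;> simp [D4, d4Step]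

theorem d4_block_home {p : DSt} (hp : p = pa ∨ p = pb) (c d : XAB) :
    d4Step (d4Step p c) d = pa ∨ d4Step (d4Step p c) d = pb := by
  rcases hp with rfl | rfl <;> cases d <;> simp [d4Step]

theorem d4_sig_after_block_iff {p : DSt} (hp : p = pa ∨ p = pb) {c : XAB} (hc : c = a ∨ c = b)
    (d : XAB) :
    (d4Step (d4Step (d4Step p x) c) x, d,
      d4Step (d4Step (d4Step (d4Step p x) c) x) d) ∈ D4.sig ↔
      (c = a ∧ d = a) ∨ (c = b ∧ d = b) := by
  rcases hp with rfl | rfl <;> rcases hc with rfl | rfl <;> cases d <;> simp [D4, d4Step]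

theorem d4_not_mem_sig_of_home {p : DSt} (hp : p = pa ∨ p = pb) (c : XAB) (q : DSt) :
    (p, c, q) ∉ D4.sig := by
  rcases hp with rfl | rfl <;> simp [D4]

/-- `(xa + xb)^ω` -/
def XaXbWord (w : ℕ → XAB) : Prop :=
  ∀ n, w (2 * n) = x ∧ (w (2 * n + 1) = a ∨ w (2 * n + 1) = b)

section D4Run

variable (w : ℕ → XAB)

local notation "ρ" => detRun d4Step D4.init w

theorem d4Run_two_mul_home (n : ℕ) : ρ (2 * n) = pa ∨ ρ (2 * n) = pb := by
  induction n with
  | zero => exact Or.inl rfl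
  | succ n ih => exact d4_block_home ih _ _

theorem d4_isRunFrom_iff : D4.IsRunFrom D4.init w ρ ↔ XaXbWord w := by
  have hblock n := d4_block_mem_trans_iff (d4Run_two_mul_home w n) (w (2 * n)) (w (2 * n + 1))
  rw [isRunFrom_detRun_iff]
  refine ⟨fun h n => (hblock n).1 ⟨h (2 * n), h (2 * n + 1)⟩, fun h i => ?_⟩
  obtain ⟨n, rfl | rfl⟩ := Nat.even_or_odd' i
  exacts [((hblock n).2 (h n)).1, ((hblock n).2 (h n)).2]

theorem d4Run_sig_add_three_iff (hw : XaXbWord w) (i : ℕ) :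
    (ρ (i + 3), w (i + 3), ρ (i + 3 + 1)) ∈ D4.sig ↔
      (w i = x ∧ w (i + 1) = a ∧ w (i + 2) = x ∧ w (i + 3) = a) ∨
      (w i = x ∧ w (i + 1) = b ∧ w (i + 2) = x ∧ w (i + 3) = b) := by
  obtain ⟨n, rfl | rfl⟩ := Nat.even_or_odd' i
  · have hx : w (2 * n + 2) = x := by simpa [mul_add] using (hw (n + 1)).1
    have hq : ρ (2 * n + 3) = d4Step (d4Step (d4Step (ρ (2 * n)) x) (w (2 * n + 1))) x := by
      change d4Step (d4Step (d4Step (ρ (2 * n)) (w (2 * n))) (w (2 * n + 1))) (w (2 * n + 2)) = _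
      rw [(hw n).1, hx]
    change (ρ (2 * n + 3), w (2 * n + 3), d4Step (ρ (2 * n + 3)) (w (2 * n + 3))) ∈ D4.sig ↔ _
    simp only [(hw n).1, hx, true_and]
    rw [hq]
    exact d4_sig_after_block_iff (d4Run_two_mul_home w n) (hw n).2 _
  · have hhome : ρ (2 * (n + 2)) = pa ∨ ρ (2 * (n + 2)) = pb := d4Run_two_mul_home w (n + 2)
    have hodd : w (2 * n + 1) ≠ x := by rcases (hw n).2 with h | h <;> simp [h]
    simp only [hodd, false_and, or_self, iff_false]
    exact d4_not_mem_sig_of_home hhome _ _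

end D4Run

/-- `D₄` is deterministic, has 4 states, and recognises `L_BKKS`. -/
theorem D4_deterministic_card_lang :
    D4.Deterministic ∧ Fintype.card DSt = 4 ∧ D4.Lang = L_BKKS := by
  refine ⟨deterministic_of_eq_step eq_d4Step_of_mem_trans, rfl, Set.ext fun w => ?_⟩
  rw [Lang, mem_langFrom_iff_of_eq_step eq_d4Step_of_mem_trans, d4_isRunFrom_iff,
    buchiAcc_iff_frequently]
  refine and_congr_right fun hw => ?_
  rw [← map_add_atTop_eq_nat 3, frequently_map]
  simp only [d4Run_sig_add_three_iff w hw]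
  rw [frequently_or_distrib, frequently_atTop, frequently_atTop]
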